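/- arXiv:2111.05734 — 2 statements merged into one kernel-verified Lean document; each statement's English description precedes it below -/
import Mathlib

section
/- Let V be an N_W=N SUSY vertex algebra and M a V-module, with Li filtration E_n(M). Then: (1) E_n(M) ⊇ E_{n+1}(M) for every n ∈ ℤ; (2) E_n(M) = M for every n ≤ 0; (3) a_{(−1−k|K)} E_n(M) ⊆ E_{n+k}(M) for every a ∈ V, k ∈ ℕ, K ⊂ [N] and n ∈ ℤ; (4) for n ≥ 1, E_n(M) equals the span of the elements a_{(−1−k|K)} m with a ∈ V, k ≥ 1, K ⊂ [N] and m ∈ E_{n−k}(M); (5) for n ≥ 1, E_n(M) equals the span of the elements a^1_{(−1−k_1|K_1)} ⋯ a^r_{(−1−k_r|K_r)} m with r ≥ 1, a^i ∈ V, m ∈ M, k_i ≥ 1, K_i ⊂ [N] and k_1+⋯+k_r ≥ n. -/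
open Finset
open scoped DirectSum

namespace SUSY

/-- The sign `(-1)^x` attached to a parity `x : ZMod 2`. -/
def sg (x : ZMod 2) : ℤ := if x = 0 then 1 else -1

/-- The reordering sign `σ(I,J)` (equal to `0` when `I` and `J` are not disjoint). -/
def ssgn {N : ℕ} (I J : Finset (Fin N)) : ℤ :=
  if Disjoint I J then (-1) ^ (((I ×ˢ J).filter fun p => p.2 < p.1).card) else 0

/-- The generalized binomial coefficient `x(x-1)⋯(x-j+1)/j!` in a field `𝕜`. -/
noncomputable def dchoose (𝕜 : Type) [Field 𝕜] (x : ℤ) (j : ℕ) : 𝕜 :=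
  (∏ i ∈ Finset.range j, ((x : 𝕜) - (i : 𝕜))) / (j.factorial : 𝕜)

/-- Ordered product `S^{l₁} ∘ ⋯ ∘ S^{l_r}` over an ordered subset `L = {l₁ < ⋯ < l_r}`. -/
def sProd {𝕜 : Type} [Field 𝕜] {V : Type} [AddCommGroup V] [Module 𝕜 V] {N : ℕ}
    (S : Fin N → Module.End 𝕜 V) (L : Finset (Fin N)) : Module.End 𝕜 V :=
  ((L.sort (· ≤ ·)).map S).prod

section Gr

variable {𝕜 : Type} [Field 𝕜] {V : Type} [AddCommGroup V] [Module 𝕜 V]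

/-- For a filtration `E`, the quotient `E n / E (n+1)`. -/
abbrev grQuot (E : ℤ → Submodule 𝕜 V) (n : ℕ) : Type :=
  ↥(E (n : ℤ)) ⧸ Submodule.comap (E (n : ℤ)).subtype (E ((n : ℤ) + 1))

/-- The associated graded space `⨁ₙ E n / E (n+1)` of a filtration `E`. -/
abbrev GrLi (E : ℤ → Submodule 𝕜 V) : Type := ⨁ n : ℕ, grQuot E n

/-- The class of an element `a ∈ E n` in the degree `n` component `E n / E (n+1)`
of the associated graded space. -/
noncomputable def grCls (E : ℤ → Submodule 𝕜 V) (n : ℕ) (a : V) (h : a ∈ E (n : ℤ)) :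
    GrLi E :=
  DirectSum.of (fun m : ℕ => grQuot E m) n (Submodule.Quotient.mk ⟨a, h⟩)

end Gr

/-- A supercommutative superalgebra structure on a (possibly noncommutative) ring `A`. -/
structure SuperRing (𝕜 : Type) [CommRing 𝕜] (A : Type) [Ring A] [Algebra 𝕜 A] : Type where
  gr : ZMod 2 → Submodule 𝕜 A
  decomp : DirectSum.Decomposition gr
  one_mem : (1 : A) ∈ gr 0
  mul_mem : ∀ (p q : ZMod 2) (x y : A), x ∈ gr p → y ∈ gr q → x * y ∈ gr (p + q)
  scomm : ∀ (p q : ZMod 2) (x y : A), x ∈ gr p → y ∈ gr q → x * y = sg (p * q) • (y * x)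

/-- An even derivation of a superalgebra. -/
structure EvenDer (𝕜 : Type) [CommRing 𝕜] (A : Type) [Ring A] [Algebra 𝕜 A]
    (SA : SuperRing 𝕜 A) : Type where
  D : A →ₗ[𝕜] A
  even : ∀ (p : ZMod 2), ∀ x ∈ SA.gr p, D x ∈ SA.gr p
  leibniz : ∀ x y : A, D (x * y) = D x * y + x * D y

/-- An odd derivation of a superalgebra. -/
structure OddDer (𝕜 : Type) [CommRing 𝕜] (A : Type) [Ring A] [Algebra 𝕜 A]
    (SA : SuperRing 𝕜 A) : Type where
  D : A →ₗ[𝕜] A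
  odd : ∀ (p : ZMod 2), ∀ x ∈ SA.gr p, D x ∈ SA.gr (p + 1)
  leibniz : ∀ (p : ZMod 2) (x y : A), x ∈ SA.gr p →
    D (x * y) = D x * y + sg p • (x * D y)

/-- The structure of a Poisson superalgebra of parity `qpar` on a `𝕜`-module `Q`:
a unital supercommutative multiplication together with a Poisson bracket of parity
`qpar` satisfying super skew-symmetry, the (parity-shifted) Jacobi identity and
the Leibniz rule. -/
structure PoissonSuperAlgStruct (𝕜 : Type) [Field 𝕜] (Q : Type) [AddCommGroup Q]
    [Module 𝕜 Q] (qpar : ZMod 2) : Type where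
  gr : ZMod 2 → Submodule 𝕜 Q
  decomp : DirectSum.Decomposition gr
  mul : Q →ₗ[𝕜] Q →ₗ[𝕜] Q
  one : Q
  br : Q →ₗ[𝕜] Q →ₗ[𝕜] Q
  one_even : one ∈ gr 0
  mul_mem : ∀ (p q : ZMod 2) (x y : Q), x ∈ gr p → y ∈ gr q → mul x y ∈ gr (p + q)
  br_mem : ∀ (p q : ZMod 2) (x y : Q), x ∈ gr p → y ∈ gr q → br x y ∈ gr (p + q + qpar)
  mul_assoc' : ∀ x y z : Q, mul (mul x y) z = mul x (mul y z)
  mul_scomm : ∀ (p q : ZMod 2) (x y : Q), x ∈ gr p → y ∈ gr q →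
    mul x y = sg (p * q) • mul y x
  one_mul' : ∀ x : Q, mul one x = x
  br_skew : ∀ (p q : ZMod 2) (x y : Q), x ∈ gr p → y ∈ gr q →
    br x y = (-sg (p * q + qpar)) • br y x
  br_jacobi : ∀ (p q r : ZMod 2) (x y z : Q), x ∈ gr p → y ∈ gr q → z ∈ gr r →
    br x (br y z)
      = (-sg (p * qpar + qpar)) • br (br x y) z
        + sg ((p + qpar) * (q + qpar)) • br y (br x z)
  leibniz : ∀ (p q : ZMod 2) (x y z : Q), x ∈ gr p → y ∈ gr q →
    br x (mul y z) = mul (br x y) z + sg ((p + qpar) * q) • mul y (br x z)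
section Structures
variable (𝕜 : Type) [Field 𝕜] [CharZero 𝕜] (N : ℕ)
variable (V : Type) [AddCommGroup V] [Module 𝕜 V]

/-- An `N_W = N` SUSY vertex algebra, described through the Fourier modes
`a_(j|J)` of the state-superfield correspondence
`Y(a,Z) = ∑ Z^(-1-j | [N]∖J) a_(j|J)`. -/
structure NWSusyVA : Type where
  gr : ZMod 2 → Submodule 𝕜 V
  decomp : DirectSum.Decomposition gr
  vac : V
  T : Module.End 𝕜 V
  S : Fin N → Module.End 𝕜 V
  mode : V →ₗ[𝕜] ℤ → Finset (Fin N) → Module.End 𝕜 V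
  mode_trunc : ∀ (a v : V), ∃ n : ℕ, ∀ j : ℤ, (n : ℤ) ≤ j → ∀ J, mode a j J v = 0
  vac_even : vac ∈ gr 0
  T_even : ∀ (p : ZMod 2), ∀ x ∈ gr p, T x ∈ gr p
  S_odd : ∀ (i : Fin N) (p : ZMod 2), ∀ x ∈ gr p, S i x ∈ gr (p + 1)
  mode_parity : ∀ (pa pv : ZMod 2) (a v : V) (j : ℤ) (J : Finset (Fin N)),
    a ∈ gr pa → v ∈ gr pv →
    mode a j J v ∈ gr (pa + pv + (N : ZMod 2) + (J.card : ZMod 2))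
  mode_vac : ∀ a : V, mode a (-1) Finset.univ vac = a
  mode_vac_nonneg : ∀ (a : V) (j : ℤ), 0 ≤ j → ∀ J, mode a j J vac = 0
  T_vac : T vac = 0
  S_vac : ∀ i, S i vac = 0
  T_transl : ∀ (a : V) (j : ℤ) (J : Finset (Fin N)),
    T * mode a j J - mode a j J * T = (-j) • mode a (j - 1) J
  S_transl : ∀ (i : Fin N) (pa : ZMod 2) (a : V), a ∈ gr pa →
    ∀ (j : ℤ) (J : Finset (Fin N)),
    S i * mode a j J
        - sg (pa + (N : ZMod 2) + (J.card : ZMod 2)) • (mode a j J * S i)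
      = ssgn (Finset.univ \ J) {i} • mode a j (J.erase i)
  locality : ∀ (pa pb : ZMod 2) (a b : V), a ∈ gr pa → b ∈ gr pb →
    ∃ n : ℕ, ∀ (p q : ℤ) (J K : Finset (Fin N)),
      (∑ i ∈ Finset.range (n + 1),
        ((-1 : ℤ) ^ i * (n.choose i : ℤ)) •
          (mode a (p + ((n - i : ℕ) : ℤ)) J * mode b (q + (i : ℤ)) K
            - sg ((pa + (N : ZMod 2) + (J.card : ZMod 2)) *
                  (pb + (N : ZMod 2) + (K.card : ZMod 2))) •
              (mode b (q + (i : ℤ)) K * mode a (p + ((n - i : ℕ) : ℤ)) J))) = 0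

/-- An `N_K = N` SUSY vertex algebra, described through the Fourier modes
`a_(j|J)` of the state-superfield correspondence. -/
structure NKSusyVA : Type where
  gr : ZMod 2 → Submodule 𝕜 V
  decomp : DirectSum.Decomposition gr
  vac : V
  SK : Fin N → Module.End 𝕜 V
  mode : V →ₗ[𝕜] ℤ → Finset (Fin N) → Module.End 𝕜 V
  mode_trunc : ∀ (a v : V), ∃ n : ℕ, ∀ j : ℤ, (n : ℤ) ≤ j → ∀ J, mode a j J v = 0
  vac_even : vac ∈ gr 0
  SK_odd : ∀ (i : Fin N) (p : ZMod 2), ∀ x ∈ gr p, SK i x ∈ gr (p + 1)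
  mode_parity : ∀ (pa pv : ZMod 2) (a v : V) (j : ℤ) (J : Finset (Fin N)),
    a ∈ gr pa → v ∈ gr pv →
    mode a j J v ∈ gr (pa + pv + (N : ZMod 2) + (J.card : ZMod 2))
  mode_vac : ∀ a : V, mode a (-1) Finset.univ vac = a
  mode_vac_nonneg : ∀ (a : V) (j : ℤ), 0 ≤ j → ∀ J, mode a j J vac = 0
  SK_vac : ∀ i, SK i vac = 0
  SK_transl : ∀ (i : Fin N) (pa : ZMod 2) (a : V), a ∈ gr pa →
    ∀ (j : ℤ) (J : Finset (Fin N)),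
    SK i * mode a j J
        - sg (pa + (N : ZMod 2) + (J.card : ZMod 2)) • (mode a j J * SK i)
      = if i ∈ J then ssgn (Finset.univ \ J) {i} • mode a j (J.erase i)
        else (-j * ssgn (Finset.univ \ insert i J) {i}) • mode a (j - 1) (insert i J)
  locality : ∀ (pa pb : ZMod 2) (a b : V), a ∈ gr pa → b ∈ gr pb →
    ∃ n : ℕ, ∀ (p q : ℤ) (J K : Finset (Fin N)),
      (∑ i ∈ Finset.range (n + 1),
        ((-1 : ℤ) ^ i * (n.choose i : ℤ)) •
          (mode a (p + ((n - i : ℕ) : ℤ)) J * mode b (q + (i : ℤ)) K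
            - sg ((pa + (N : ZMod 2) + (J.card : ZMod 2)) *
                  (pb + (N : ZMod 2) + (K.card : ZMod 2))) •
              (mode b (q + (i : ℤ)) K * mode a (p + ((n - i : ℕ) : ℤ)) J))) = 0

variable (M : Type) [AddCommGroup M] [Module 𝕜 M]

/-- A module over an `N_W = N` SUSY vertex algebra, given by the Fourier modes of
the superfields `Y^M(a,Z)`, satisfying the standard module axioms (vacuum acting as
the identity, translation invariance, and the Borcherds-type identities, i.e. the
SUSY commutator formula and the SUSY iterate formula hold for the action on `M`). -/
structure NWModule (W : NWSusyVA 𝕜 N V) : Type where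
  grM : ZMod 2 → Submodule 𝕜 M
  decompM : DirectSum.Decomposition grM
  amode : V →ₗ[𝕜] ℤ → Finset (Fin N) → Module.End 𝕜 M
  amode_trunc : ∀ (a : V) (m : M), ∃ n : ℕ, ∀ j : ℤ, (n : ℤ) ≤ j → ∀ J, amode a j J m = 0
  amode_parity : ∀ (pa pm : ZMod 2) (a : V) (m : M) (j : ℤ) (J : Finset (Fin N)),
    a ∈ W.gr pa → m ∈ grM pm →
    amode a j J m ∈ grM (pa + pm + (N : ZMod 2) + (J.card : ZMod 2))
  vac_act : ∀ (j : ℤ) (J : Finset (Fin N)),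
    amode W.vac j J = if j = -1 ∧ J = Finset.univ then 1 else 0
  T_act : ∀ (a : V) (j : ℤ) (J : Finset (Fin N)),
    amode (W.T a) j J = (-j) • amode a (j - 1) J
  S_act : ∀ (i : Fin N) (a : V) (j : ℤ) (J : Finset (Fin N)),
    amode (W.S i a) j J = ssgn {i} (Finset.univ \ J) • amode a j (J.erase i)
  comm_formula : ∀ (pa pb : ZMod 2) (a b : V), a ∈ W.gr pa → b ∈ W.gr pb →
    ∀ (l m : ℤ) (L M' : Finset (Fin N)) (u : M),
    amode a l L (amode b m M' u)
        - sg ((pa + (N : ZMod 2) + (L.card : ZMod 2)) *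
              (pb + (N : ZMod 2) + (M'.card : ZMod 2))) •
            amode b m M' (amode a l L u)
      = ∑ᶠ j : ℕ, ∑ J : Finset (Fin N),
          if L ∩ M' ⊆ J then
            (((sg ((pa + (N : ZMod 2) + (L.card : ZMod 2)) *
                     ((N : ZMod 2) + (M'.card : ZMod 2))
                   + ((L.card : ZMod 2) + (J.card : ZMod 2)) *
                     ((N : ZMod 2) + (J.card : ZMod 2)))
                * (ssgn J (Finset.univ \ J) * ssgn L (Finset.univ \ L) * ssgn J (L \ J)
                    * ssgn (L \ J) ((Finset.univ \ M') \ (L \ J))) : ℤ) : 𝕜)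
              * dchoose 𝕜 l j) •
            amode (W.mode a (j : ℤ) J b) (l + m - (j : ℤ)) (M' ∪ (L \ J)) u
          else 0
  iterate_formula : ∀ (pa pb : ZMod 2) (a b : V), a ∈ W.gr pa → b ∈ W.gr pb →
    ∀ (k l : ℤ) (K L : Finset (Fin N)) (u : M),
    amode (W.mode a k K b) l L u
      = ∑ᶠ j : ℕ, ∑ J ∈ K.powerset,
          (((sg ((j : ZMod 2)
                 + ((K \ J).card : ZMod 2) * (1 + ((Finset.univ \ J).card : ZMod 2)))
              * (ssgn J (K \ J) * ssgn J (Finset.univ \ J) * ssgn L (K \ J)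
                  * ssgn (L ∪ (K \ J)) (Finset.univ \ (L ∪ (K \ J)))) : ℤ) : 𝕜)
            * dchoose 𝕜 k j) •
          (sg ((pa + (N : ZMod 2) + (J.card : ZMod 2)) *
                ((Finset.univ \ (L ∪ (K \ J))).card : ZMod 2)) •
              amode a (k - (j : ℤ)) J (amode b (l + (j : ℤ)) (L ∪ (K \ J)) u)
            - sg ((k : ZMod 2) + pa * pb
                  + (pb + (N : ZMod 2) + (J.card : ZMod 2)) *
                    ((Finset.univ \ (L ∪ (K \ J))).card : ZMod 2)) •
              amode b (k + l - (j : ℤ)) (L ∪ (K \ J)) (amode a (j : ℤ) J u))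

/-- A module over an `N_K = N` SUSY vertex algebra. -/
structure NKModule (W : NKSusyVA 𝕜 N V) : Type where
  grM : ZMod 2 → Submodule 𝕜 M
  decompM : DirectSum.Decomposition grM
  amode : V →ₗ[𝕜] ℤ → Finset (Fin N) → Module.End 𝕜 M
  amode_trunc : ∀ (a : V) (m : M), ∃ n : ℕ, ∀ j : ℤ, (n : ℤ) ≤ j → ∀ J, amode a j J m = 0
  amode_parity : ∀ (pa pm : ZMod 2) (a : V) (m : M) (j : ℤ) (J : Finset (Fin N)),
    a ∈ W.gr pa → m ∈ grM pm →
    amode a j J m ∈ grM (pa + pm + (N : ZMod 2) + (J.card : ZMod 2))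
  vac_act : ∀ (j : ℤ) (J : Finset (Fin N)),
    amode W.vac j J = if j = -1 ∧ J = Finset.univ then 1 else 0
  SK_act : ∀ (i : Fin N) (a : V) (j : ℤ) (J : Finset (Fin N)),
    amode (W.SK i a) j J
      = if i ∈ J then ssgn (Finset.univ \ J) {i} • amode a j (J.erase i)
        else (-j * ssgn (Finset.univ \ insert i J) {i}) • amode a (j - 1) (insert i J)
  comm_formula : ∀ (pa pb : ZMod 2) (a b : V), a ∈ W.gr pa → b ∈ W.gr pb →
    ∀ (l m : ℤ) (L M' : Finset (Fin N)) (u : M),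
    amode a l L (amode b m M' u)
        - sg ((pa + (N : ZMod 2) + (L.card : ZMod 2)) *
              (pb + (N : ZMod 2) + (M'.card : ZMod 2))) •
            amode b m M' (amode a l L u)
      = ∑ᶠ j : ℕ, ∑ J : Finset (Fin N),
          if M' ∩ ((J \ L) ∪ (L \ J)) = ∅ then
            (((sg ((pa + (N : ZMod 2) + (L.card : ZMod 2)) *
                     ((N : ZMod 2) + (M'.card : ZMod 2))
                   + (J.card : ZMod 2) * ((N : ZMod 2) + (L.card : ZMod 2))
                   + (L.card : ZMod 2) * (N : ZMod 2)
                   + (((J ∩ L).card.choose 2 : ℕ) : ZMod 2)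
                   + (((J.card + 1).choose 2 : ℕ) : ZMod 2))
                * (ssgn ((J \ L) ∪ (L \ J))
                      (Finset.univ \ (M' ∪ (J \ L) ∪ (L \ J)))
                    * ssgn J (Finset.univ \ J) * ssgn L (Finset.univ \ L)
                    * ssgn (J \ L) (J ∩ L) * ssgn (J ∩ L) (L \ J)
                    * ssgn (J \ L) (L \ J)) : ℤ) : 𝕜)
              * ((∏ i ∈ Finset.range (j + (J \ L).card), ((l : 𝕜) - (i : 𝕜)))
                  / (j.factorial : 𝕜))) •
            amode (W.mode a (j : ℤ) J b)
              (l + m - (j : ℤ) - ((J \ L).card : ℤ)) (M' ∪ (J \ L) ∪ (L \ J)) u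
          else 0
  iterate_formula : ∀ (pa pb : ZMod 2) (a b : V), a ∈ W.gr pa → b ∈ W.gr pb →
    ∀ (k l : ℤ) (K L : Finset (Fin N)) (w : M),
    amode (W.mode a k K b) l L w
      = ∑ᶠ j : ℕ, ∑ J : Finset (Fin N), ∑ M' ∈ (J ∩ K).powerset,
          (((sg ((j : ZMod 2)
                 + ((((J \ M').card + 1).choose 2 : ℕ) : ZMod 2)
                 + ((J \ M').card : ZMod 2) *
                     ((M'.card : ZMod 2) + ((Finset.univ \ J).card : ZMod 2))
                 + ((K \ M').card : ZMod 2) * (1 + ((Finset.univ \ J).card : ZMod 2))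
                 + ((Finset.univ \ J).card : ZMod 2) *
                     ((Finset.univ \ (L ∪ (J \ M') ∪ (K \ M'))).card : ZMod 2))
              * (ssgn M' (K \ M') * ssgn (J \ M') M' * ssgn J (Finset.univ \ J)
                  * ssgn (J \ M') (K \ M') * ssgn L ((J \ M') ∪ (K \ M'))
                  * ssgn (L ∪ (J \ M') ∪ (K \ M'))
                      (Finset.univ \ (L ∪ (J \ M') ∪ (K \ M')))) : ℤ) : 𝕜)
            * dchoose 𝕜 k j * dchoose 𝕜 (k - (j : ℤ)) ((J \ M').card)) •
          (sg ((pa + (N : ZMod 2) + (J.card : ZMod 2)) *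
                ((Finset.univ \ (L ∪ (J \ M') ∪ (K \ M'))).card : ZMod 2)) •
              amode a (k - (j : ℤ) - ((J \ M').card : ℤ)) J
                (amode b (l + (j : ℤ)) (L ∪ (J \ M') ∪ (K \ M')) w)
            - sg ((k : ZMod 2) + pa * pb
                  + (pb + (N : ZMod 2) + (J.card : ZMod 2)) *
                    ((Finset.univ \ (L ∪ (J \ M') ∪ (K \ M'))).card : ZMod 2)) •
              amode b (l + k - (j : ℤ) - ((J \ M').card : ℤ))
                (L ∪ (J \ M') ∪ (K \ M')) (amode a (j : ℤ) J w))

end Structures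
section Defs

variable {𝕜 : Type} [Field 𝕜] [CharZero 𝕜] {N : ℕ}
variable {V : Type} [AddCommGroup V] [Module 𝕜 V]

/-- Commutativity of a SUSY vertex algebra: all superfields supercommute, i.e.
`[Y(a,Z), Y(b,W)] = 0` for `a`, `b` of pure parity. -/
def NWSusyVA.IsCommutative (W : NWSusyVA 𝕜 N V) : Prop :=
  ∀ (pa pb : ZMod 2) (a b : V), a ∈ W.gr pa → b ∈ W.gr pb →
    ∀ (j m : ℤ) (J M : Finset (Fin N)),
      W.mode a j J * W.mode b m M
        = sg ((pa + (N : ZMod 2) + (J.card : ZMod 2)) *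
              (pb + (N : ZMod 2) + (M.card : ZMod 2))) •
            (W.mode b m M * W.mode a j J)

/-- Commutativity of an `N_K = N` SUSY vertex algebra. -/
def NKSusyVA.IsCommutative (W : NKSusyVA 𝕜 N V) : Prop :=
  ∀ (pa pb : ZMod 2) (a b : V), a ∈ W.gr pa → b ∈ W.gr pb →
    ∀ (j m : ℤ) (J M : Finset (Fin N)),
      W.mode a j J * W.mode b m M
        = sg ((pa + (N : ZMod 2) + (J.card : ZMod 2)) *
              (pb + (N : ZMod 2) + (M.card : ZMod 2))) •
            (W.mode b m M * W.mode a j J)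

/-- The normally ordered product `a ⋅ b := a_(-1|[N]) b`. -/
def NWSusyVA.prod (W : NWSusyVA 𝕜 N V) (a b : V) : V := W.mode a (-1) Finset.univ b

/-- The normally ordered product `a ⋅ b := a_(-1|[N]) b`. -/
def NKSusyVA.prod (W : NKSusyVA 𝕜 N V) (a b : V) : V := W.mode a (-1) Finset.univ b

/-- The Li filtration of an `N_W = N` SUSY vertex algebra:
`E n` is spanned by the elements `a¹_(-1-k₁|K₁) ⋯ a^r_(-1-k_r|K_r) b`
with `r ≥ 1` and `k₁ + ⋯ + k_r ≥ n`. -/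
def NWSusyVA.liFil (W : NWSusyVA 𝕜 N V) (n : ℤ) : Submodule 𝕜 V :=
  Submodule.span 𝕜 {x : V | ∃ (r : ℕ) (a : Fin (r + 1) → V) (k : Fin (r + 1) → ℕ)
      (K : Fin (r + 1) → Finset (Fin N)) (b : V),
      n ≤ ∑ i, (k i : ℤ) ∧
      x = ((List.ofFn fun i => W.mode (a i) (-1 - (k i : ℤ)) (K i)).prod) b}

/-- The Li filtration of an `N_K = N` SUSY vertex algebra. -/
def NKSusyVA.liFil (W : NKSusyVA 𝕜 N V) (n : ℤ) : Submodule 𝕜 V :=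
  Submodule.span 𝕜 {x : V | ∃ (r : ℕ) (a : Fin (r + 1) → V) (k : Fin (r + 1) → ℕ)
      (K : Fin (r + 1) → Finset (Fin N)) (b : V),
      n ≤ ∑ i, (k i : ℤ) ∧
      x = ((List.ofFn fun i => W.mode (a i) (-1 - (k i : ℤ)) (K i)).prod) b}

/-- The subspace `C₂(V) = span{ a_(-j|J) b : j ≥ 2 }`. -/
def NWSusyVA.C2sub (W : NWSusyVA 𝕜 N V) : Submodule 𝕜 V :=
  Submodule.span 𝕜 {x : V | ∃ (a b : V) (j : ℕ) (J : Finset (Fin N)),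
    2 ≤ j ∧ x = W.mode a (-(j : ℤ)) J b}

/-- The subspace `C₂(V) = span{ a_(-j|J) b : j ≥ 2 }`. -/
def NKSusyVA.C2sub (W : NKSusyVA 𝕜 N V) : Submodule 𝕜 V :=
  Submodule.span 𝕜 {x : V | ∃ (a b : V) (j : ℕ) (J : Finset (Fin N)),
    2 ≤ j ∧ x = W.mode a (-(j : ℤ)) J b}

/-- The set of states generated from a set `G` of strong generators. -/
def NWSusyVA.genSet (W : NWSusyVA 𝕜 N V) (G : Finset V) : Set V :=
  {x : V | ∃ (r : ℕ) (a : Fin r → V) (p : Fin r → ℕ) (P : Fin r → Finset (Fin N)),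
    (∀ i, a i ∈ G ∧ 1 ≤ p i) ∧
    x = ((List.ofFn fun i => W.mode (a i) (-(p i : ℤ)) (P i)).prod) W.vac}

/-- The set of states generated from a set `G` of strong generators. -/
def NKSusyVA.genSet (W : NKSusyVA 𝕜 N V) (G : Finset V) : Set V :=
  {x : V | ∃ (r : ℕ) (a : Fin r → V) (p : Fin r → ℕ) (P : Fin r → Finset (Fin N)),
    (∀ i, a i ∈ G ∧ 1 ≤ p i) ∧
    x = ((List.ofFn fun i => W.mode (a i) (-(p i : ℤ)) (P i)).prod) W.vac}

/-- Monomials in a set `G` of generators, with respect to the product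
`a ⋅ m = a_(-1|[N]) m` (lifting products of the classes `ā` in `R_V = V/C₂(V)`). -/
inductive NWMon (W : NWSusyVA 𝕜 N V) (G : Finset V) : V → Prop
  | vac : NWMon W G W.vac
  | step (g : V) (hg : g ∈ G) (m : V) (hm : NWMon W G m) :
      NWMon W G (W.mode g (-1) Finset.univ m)

/-- Monomials in a set `G` of generators, with respect to the product
`a ⋅ m = a_(-1|[N]) m`. -/
inductive NKMon (W : NKSusyVA 𝕜 N V) (G : Finset V) : V → Prop
  | vac : NKMon W G W.vac
  | step (g : V) (hg : g ∈ G) (m : V) (hm : NKMon W G m) :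
      NKMon W G (W.mode g (-1) Finset.univ m)

end Defs
section ModDefs

variable {𝕜 : Type} [Field 𝕜] [CharZero 𝕜] {N : ℕ}
variable {V : Type} [AddCommGroup V] [Module 𝕜 V]
variable {M : Type} [AddCommGroup M] [Module 𝕜 M]

/-- The Li filtration of a module over an `N_W = N` SUSY vertex algebra. -/
def NWModule.liFil {W : NWSusyVA 𝕜 N V} (Ms : NWModule 𝕜 N V M W) (n : ℤ) :
    Submodule 𝕜 M :=
  Submodule.span 𝕜 {x : M | ∃ (r : ℕ) (a : Fin (r + 1) → V) (k : Fin (r + 1) → ℕ)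
      (K : Fin (r + 1) → Finset (Fin N)) (m : M),
      n ≤ ∑ i, (k i : ℤ) ∧
      x = ((List.ofFn fun i => Ms.amode (a i) (-1 - (k i : ℤ)) (K i)).prod) m}

/-- The Li filtration of a module over an `N_K = N` SUSY vertex algebra. -/
def NKModule.liFil {W : NKSusyVA 𝕜 N V} (Ms : NKModule 𝕜 N V M W) (n : ℤ) :
    Submodule 𝕜 M :=
  Submodule.span 𝕜 {x : M | ∃ (r : ℕ) (a : Fin (r + 1) → V) (k : Fin (r + 1) → ℕ)
      (K : Fin (r + 1) → Finset (Fin N)) (m : M),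
      n ≤ ∑ i, (k i : ℤ) ∧
      x = ((List.ofFn fun i => Ms.amode (a i) (-1 - (k i : ℤ)) (K i)).prod) m}

/-- `C₂(M) = span{ a_(-j|J) m : j ≥ 2 }`. -/
def NWModule.C2M {W : NWSusyVA 𝕜 N V} (Ms : NWModule 𝕜 N V M W) : Submodule 𝕜 M :=
  Submodule.span 𝕜 {x : M | ∃ (a : V) (j : ℕ) (J : Finset (Fin N)) (m : M),
    2 ≤ j ∧ x = Ms.amode a (-(j : ℤ)) J m}

/-- `C₂(M) = span{ a_(-j|J) m : j ≥ 2 }`. -/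
def NKModule.C2M {W : NKSusyVA 𝕜 N V} (Ms : NKModule 𝕜 N V M W) : Submodule 𝕜 M :=
  Submodule.span 𝕜 {x : M | ∃ (a : V) (j : ℕ) (J : Finset (Fin N)) (m : M),
    2 ≤ j ∧ x = Ms.amode a (-(j : ℤ)) J m}

end ModDefs
section Structures2
variable (𝕜 : Type) [Field 𝕜] [CharZero 𝕜] (N : ℕ)
variable (V : Type) [AddCommGroup V] [Module 𝕜 V]
/-- An `N_W = N` SUSY vertex Lie algebra: the data of the nonnegative Fourier modes
`a_(j|J)` (`j ≥ 0`) of a "singular part" state-superfield correspondence `Y₋`,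
satisfying translation invariance, skew-symmetry (in the expanded mode form
involving `e^{Z∇}` with `Z∇ = zT + ∑ ζ^i S^i`) and the supercommutator axiom
(in the equivalent mode form of the SUSY commutator formula). -/
structure NWSusyVLA : Type where
  gr : ZMod 2 → Submodule 𝕜 V
  decomp : DirectSum.Decomposition gr
  T : Module.End 𝕜 V
  S : Fin N → Module.End 𝕜 V
  lmode : V →ₗ[𝕜] ℕ → Finset (Fin N) → Module.End 𝕜 V
  lmode_trunc : ∀ (a v : V), ∃ n : ℕ, ∀ j : ℕ, n ≤ j → ∀ J, lmode a j J v = 0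
  T_even : ∀ (p : ZMod 2), ∀ x ∈ gr p, T x ∈ gr p
  S_odd : ∀ (i : Fin N) (p : ZMod 2), ∀ x ∈ gr p, S i x ∈ gr (p + 1)
  lmode_parity : ∀ (pa pv : ZMod 2) (a v : V) (j : ℕ) (J : Finset (Fin N)),
    a ∈ gr pa → v ∈ gr pv →
    lmode a j J v ∈ gr (pa + pv + (N : ZMod 2) + (J.card : ZMod 2))
  transl_T : ∀ (a : V) (j : ℕ) (J : Finset (Fin N)),
    lmode (T a) j J = (-(j : ℤ)) • lmode a (j - 1) J
  transl_S : ∀ (i : Fin N) (a : V) (j : ℕ) (J : Finset (Fin N)),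
    lmode (S i a) j J = ssgn {i} (Finset.univ \ J) • lmode a j (J.erase i)
  skew : ∀ (pa pb : ZMod 2) (a b : V), a ∈ gr pa → b ∈ gr pb →
    ∀ (j : ℕ) (J : Finset (Fin N)),
    lmode a j J b
      = ((sg (pa * pb) : ℤ) : 𝕜) •
          ∑ᶠ l : ℕ, ∑ L ∈ (Finset.univ \ J).powerset,
            (((sg (((L.card.choose 2 : ℕ) : ZMod 2) + 1 + (j : ZMod 2) + (l : ZMod 2)
                   + (N : ZMod 2) + ((J ∪ L).card : ZMod 2)
                   + (L.card : ZMod 2) * ((N : ZMod 2) + ((J ∪ L).card : ZMod 2)))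
                * ssgn L ((Finset.univ \ J) \ L) : ℤ) : 𝕜)
              * (l.factorial : 𝕜)⁻¹) •
            ((T ^ l * sProd S L) (lmode b (j + l) (J ∪ L) a))
  commutator : ∀ (pa pb : ZMod 2) (a b : V), a ∈ gr pa → b ∈ gr pb →
    ∀ (l m : ℕ) (L M' : Finset (Fin N)) (v : V),
    lmode a l L (lmode b m M' v)
        - sg ((pa + (N : ZMod 2) + (L.card : ZMod 2)) *
              (pb + (N : ZMod 2) + (M'.card : ZMod 2))) •
            lmode b m M' (lmode a l L v)
      = ∑ j ∈ Finset.range (l + 1), ∑ J : Finset (Fin N),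
          if L ∩ M' ⊆ J then
            (((sg ((pa + (N : ZMod 2) + (L.card : ZMod 2)) *
                     ((N : ZMod 2) + (M'.card : ZMod 2))
                   + ((L.card : ZMod 2) + (J.card : ZMod 2)) *
                     ((N : ZMod 2) + (J.card : ZMod 2)))
                * (ssgn J (Finset.univ \ J) * ssgn L (Finset.univ \ L) * ssgn J (L \ J)
                    * ssgn (L \ J) ((Finset.univ \ M') \ (L \ J))) : ℤ) : 𝕜)
              * (l.choose j : 𝕜)) •
            lmode (lmode a j J b) (l + m - j) (M' ∪ (L \ J)) v
          else 0

/-- An `N_K = N` SUSY vertex Lie algebra. -/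
structure NKSusyVLA : Type where
  gr : ZMod 2 → Submodule 𝕜 V
  decomp : DirectSum.Decomposition gr
  SK : Fin N → Module.End 𝕜 V
  T : Module.End 𝕜 V
  T_sq : ∀ i : Fin N, SK i * SK i = T
  lmode : V →ₗ[𝕜] ℕ → Finset (Fin N) → Module.End 𝕜 V
  lmode_trunc : ∀ (a v : V), ∃ n : ℕ, ∀ j : ℕ, n ≤ j → ∀ J, lmode a j J v = 0
  SK_odd : ∀ (i : Fin N) (p : ZMod 2), ∀ x ∈ gr p, SK i x ∈ gr (p + 1)
  lmode_parity : ∀ (pa pv : ZMod 2) (a v : V) (j : ℕ) (J : Finset (Fin N)),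
    a ∈ gr pa → v ∈ gr pv →
    lmode a j J v ∈ gr (pa + pv + (N : ZMod 2) + (J.card : ZMod 2))
  transl_SK : ∀ (i : Fin N) (a : V) (j : ℕ) (J : Finset (Fin N)),
    lmode (SK i a) j J
      = if i ∈ J then ssgn (Finset.univ \ J) {i} • lmode a j (J.erase i)
        else (-(j : ℤ) * ssgn (Finset.univ \ insert i J) {i}) • lmode a (j - 1) (insert i J)
  skew : ∀ (pa pb : ZMod 2) (a b : V), a ∈ gr pa → b ∈ gr pb →
    ∀ (j : ℕ) (J : Finset (Fin N)),
    lmode a j J b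
      = ((sg (pa * pb) : ℤ) : 𝕜) •
          ∑ᶠ l : ℕ, ∑ L ∈ (Finset.univ \ J).powerset,
            (((sg (((L.card.choose 2 : ℕ) : ZMod 2) + 1 + (j : ZMod 2) + (l : ZMod 2)
                   + (N : ZMod 2) + ((J ∪ L).card : ZMod 2)
                   + (L.card : ZMod 2) * ((N : ZMod 2) + ((J ∪ L).card : ZMod 2)))
                * ssgn L ((Finset.univ \ J) \ L) : ℤ) : 𝕜)
              * (l.factorial : 𝕜)⁻¹) •
            ((T ^ l * sProd SK L) (lmode b (j + l) (J ∪ L) a))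
  commutator : ∀ (pa pb : ZMod 2) (a b : V), a ∈ gr pa → b ∈ gr pb →
    ∀ (l m : ℕ) (L M' : Finset (Fin N)) (v : V),
    lmode a l L (lmode b m M' v)
        - sg ((pa + (N : ZMod 2) + (L.card : ZMod 2)) *
              (pb + (N : ZMod 2) + (M'.card : ZMod 2))) •
            lmode b m M' (lmode a l L v)
      = ∑ j ∈ Finset.range (l + 1), ∑ J : Finset (Fin N),
          if M' ∩ ((J \ L) ∪ (L \ J)) = ∅ then
            (((sg ((pa + (N : ZMod 2) + (L.card : ZMod 2)) *
                     ((N : ZMod 2) + (M'.card : ZMod 2))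
                   + (J.card : ZMod 2) * ((N : ZMod 2) + (L.card : ZMod 2))
                   + (L.card : ZMod 2) * (N : ZMod 2)
                   + (((J ∩ L).card.choose 2 : ℕ) : ZMod 2)
                   + (((J.card + 1).choose 2 : ℕ) : ZMod 2))
                * (ssgn ((J \ L) ∪ (L \ J))
                      (Finset.univ \ (M' ∪ (J \ L) ∪ (L \ J)))
                    * ssgn J (Finset.univ \ J) * ssgn L (Finset.univ \ L)
                    * ssgn (J \ L) (J ∩ L) * ssgn (J ∩ L) (L \ J)
                    * ssgn (J \ L) (L \ J)) : ℤ) : 𝕜)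
              * ((∏ i ∈ Finset.range (j + (J \ L).card), ((l : 𝕜) - (i : 𝕜)))
                  / (j.factorial : 𝕜))) •
            lmode (lmode a j J b) (l + m - j - (J \ L).card) (M' ∪ (J \ L) ∪ (L \ J)) v
          else 0

/-- An `N_W = N` SUSY vertex Poisson algebra: a commutative `N_W = N` SUSY vertex
algebra together with an `N_W = N` SUSY vertex Lie algebra structure with the same
grading and operators `T`, `S^i`, such that the vertex Lie modes act as
super-derivations of the commutative product `b ⋅ c = b_(-1|[N]) c`. -/
structure NWSusyVPA : Type where
  toVA : NWSusyVA 𝕜 N V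
  commVA : toVA.IsCommutative
  toVLA : NWSusyVLA 𝕜 N V
  gr_eq : toVLA.gr = toVA.gr
  T_eq : toVLA.T = toVA.T
  S_eq : toVLA.S = toVA.S
  leibniz : ∀ (pa pb : ZMod 2) (a b : V), a ∈ toVA.gr pa → b ∈ toVA.gr pb →
    ∀ (j : ℕ) (J : Finset (Fin N)) (c : V),
      toVLA.lmode a j J (toVA.mode b (-1) Finset.univ c)
        = toVA.mode (toVLA.lmode a j J b) (-1) Finset.univ c
          + sg ((pa + (J.card : ZMod 2)) * pb) •
              toVA.mode b (-1) Finset.univ (toVLA.lmode a j J c)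

/-- An `N_K = N` SUSY vertex Poisson algebra. -/
structure NKSusyVPA : Type where
  toVA : NKSusyVA 𝕜 N V
  commVA : toVA.IsCommutative
  toVLA : NKSusyVLA 𝕜 N V
  gr_eq : toVLA.gr = toVA.gr
  SK_eq : toVLA.SK = toVA.SK
  leibniz : ∀ (pa pb : ZMod 2) (a b : V), a ∈ toVA.gr pa → b ∈ toVA.gr pb →
    ∀ (j : ℕ) (J : Finset (Fin N)) (c : V),
      toVLA.lmode a j J (toVA.mode b (-1) Finset.univ c)
        = toVA.mode (toVLA.lmode a j J b) (-1) Finset.univ c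
          + sg ((pa + (J.card : ZMod 2)) * pb) •
              toVA.mode b (-1) Finset.univ (toVLA.lmode a j J c)
end Structures2

section AuxNW

set_option linter.unusedSectionVars false

variable {𝕜 : Type} [Field 𝕜] [CharZero 𝕜] {N : ℕ}
variable {V : Type} [AddCommGroup V] [Module 𝕜 V]
variable {M : Type} [AddCommGroup M] [Module 𝕜 M]
variable {W : NWSusyVA 𝕜 N V} (Ms : NWModule 𝕜 N V M W)

lemma finsum_mem_submodule' {P : Type} [AddCommGroup P] [Module 𝕜 P]
    (p : Submodule 𝕜 P) (f : ℕ → P) (h : ∀ i, f i ∈ p) : (∑ᶠ i, f i) ∈ p := by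
  by_cases hf : (Function.support f).Finite
  · rw [finsum_eq_sum f hf]
    exact Submodule.sum_mem _ fun i _ => h i
  · rw [finsum_of_infinite_support hf]
    exact p.zero_mem

lemma NW_mono {m n : ℤ} (h : m ≤ n) : Ms.liFil n ≤ Ms.liFil m := by
  apply Submodule.span_mono
  rintro x ⟨r, a, k, K, b, hsum, hx⟩
  exact ⟨r, a, k, K, b, le_trans h hsum, hx⟩

lemma NW_top {n : ℤ} (h : n ≤ 0) : Ms.liFil n = ⊤ := by
  rw [eq_top_iff]
  intro x _
  apply Submodule.subset_span
  refine ⟨0, fun _ => W.vac, fun _ => 0, fun _ => Finset.univ, x, ?_, ?_⟩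
  · simpa using h
  · simp [List.ofFn_succ, Ms.vac_act]

lemma NW_cons_prod (a : V) (k : ℕ) (K : Finset (Fin N)) {r : ℕ}
    (a' : Fin (r + 1) → V) (k' : Fin (r + 1) → ℕ) (K' : Fin (r + 1) → Finset (Fin N)) :
    (List.ofFn fun i : Fin (r + 2) =>
        Ms.amode ((Fin.cons a a' : Fin (r + 2) → V) i)
          (-1 - (((Fin.cons k k' : Fin (r + 2) → ℕ) i : ℕ) : ℤ))
          ((Fin.cons K K' : Fin (r + 2) → Finset (Fin N)) i)).prod
      = Ms.amode a (-1 - (k : ℤ)) K *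
        (List.ofFn fun i : Fin (r + 1) =>
          Ms.amode (a' i) (-1 - ((k' i : ℕ) : ℤ)) (K' i)).prod := by
  rw [List.ofFn_succ, List.prod_cons]
  simp [Fin.cons_succ, Fin.cons_zero]

lemma NW_cons_sum {r : ℕ} (k : ℕ) (k' : Fin (r + 1) → ℕ) :
    ∑ i : Fin (r + 2), (((Fin.cons k k' : Fin (r + 2) → ℕ) i : ℕ) : ℤ)
      = (k : ℤ) + ∑ i : Fin (r + 1), ((k' i : ℕ) : ℤ) := by
  rw [Fin.sum_univ_succ]
  simp [Fin.cons_succ, Fin.cons_zero]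

lemma NW_mode_mem {n : ℤ} (a : V) (k : ℕ) (K : Finset (Fin N)) {x : M}
    (hx : x ∈ Ms.liFil n) : Ms.amode a (-1 - (k : ℤ)) K x ∈ Ms.liFil (n + k) := by
  induction hx using Submodule.span_induction with
  | mem x hx =>
    obtain ⟨r, a', k', K', m, hsum, rfl⟩ := hx
    apply Submodule.subset_span
    refine ⟨r + 1, Fin.cons a a', Fin.cons k k', Fin.cons K K', m, ?_, ?_⟩
    · rw [NW_cons_sum]; omega
    · rw [NW_cons_prod, Module.End.mul_apply]
  | zero => rw [map_zero]; exact zero_mem _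
  | add x y _ _ hx hy => rw [map_add]; exact add_mem hx hy
  | smul c x _ hx => rw [map_smul]; exact Submodule.smul_mem _ _ hx

/-- The auxiliary span `F n` appearing in part (4). -/
def NWF (n : ℤ) : Submodule 𝕜 M :=
  Submodule.span 𝕜 {x : M | ∃ (a : V) (k : ℕ) (K : Finset (Fin N)) (m : M),
    1 ≤ k ∧ m ∈ Ms.liFil (n - k) ∧ x = Ms.amode a (-1 - (k : ℤ)) K m}

lemma NW_F_le_E (n : ℤ) : NWF Ms n ≤ Ms.liFil n := by
  apply Submodule.span_le.mpr
  rintro x ⟨a, k, K, m, hk, hm, rfl⟩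
  have := NW_mode_mem Ms a k K hm
  rwa [sub_add_cancel] at this

lemma NW_claimC {n : ℤ} {pa pb : ZMod 2} {a b : V} (ha : a ∈ W.gr pa) (hb : b ∈ W.gr pb)
    (L : Finset (Fin N)) (k : ℕ) (K' : Finset (Fin N)) (m' : M) (hk : 1 ≤ k)
    (hm : m' ∈ Ms.liFil (n - k)) :
    Ms.amode a (-1) L (Ms.amode b (-1 - (k : ℤ)) K' m') ∈ NWF Ms n := by
  have hcomm := Ms.comm_formula pa pb a b ha hb (-1) (-1 - (k : ℤ)) L K' m'
  rw [sub_eq_iff_eq_add.mp hcomm]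
  apply add_mem
  · apply finsum_mem_submodule'
    intro j
    apply Submodule.sum_mem
    intro J _
    split_ifs with hJ
    · apply Submodule.smul_mem
      have hidx : (-1 : ℤ) + (-1 - (k : ℤ)) - (j : ℤ) = -1 - ((k + 1 + j : ℕ) : ℤ) := by
        push_cast; ring
      rw [hidx]
      apply Submodule.subset_span
      refine ⟨W.mode a (j : ℤ) J b, k + 1 + j, K' ∪ (L \ J), m', by omega, ?_, rfl⟩
      exact NW_mono Ms (by push_cast; omega) hm
    · exact zero_mem _
  · apply zsmul_mem
    apply Submodule.subset_span
    refine ⟨b, k, K', Ms.amode a (-1) L m', hk, ?_, rfl⟩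
    have := NW_mode_mem Ms a 0 L hm
    simpa using this

lemma NW_claimC' (n : ℤ) (a b : V)
    (L : Finset (Fin N)) (k : ℕ) (K' : Finset (Fin N)) (m' : M) (hk : 1 ≤ k)
    (hm : m' ∈ Ms.liFil (n - k)) :
    Ms.amode a (-1) L (Ms.amode b (-1 - (k : ℤ)) K' m') ∈ NWF Ms n := by
  classical
  letI : DirectSum.Decomposition W.gr := W.decomp
  have H : ∀ (pb : ZMod 2) (b' : V), b' ∈ W.gr pb →
      Ms.amode a (-1) L (Ms.amode b' (-1 - (k : ℤ)) K' m') ∈ NWF Ms n := by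
    intro pb b' hb'
    have ea : Ms.amode a (-1) L (Ms.amode b' (-1 - (k : ℤ)) K' m')
        = ∑ p ∈ DFinsupp.support (DirectSum.decompose W.gr a),
            Ms.amode (DirectSum.decompose W.gr a p : V) (-1) L
              (Ms.amode b' (-1 - (k : ℤ)) K' m') := by
      conv_lhs => rw [← DirectSum.sum_support_decompose W.gr a]
      rw [map_sum]
      simp only [Finset.sum_apply, LinearMap.sum_apply]
    rw [ea]
    exact Submodule.sum_mem _ fun p _ =>
      NW_claimC Ms (SetLike.coe_mem _) hb' L k K' m' hk hm
  have eb : Ms.amode a (-1) L (Ms.amode b (-1 - (k : ℤ)) K' m')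
      = ∑ q ∈ DFinsupp.support (DirectSum.decompose W.gr b),
          Ms.amode a (-1) L
            (Ms.amode (DirectSum.decompose W.gr b q : V) (-1 - (k : ℤ)) K' m') := by
    conv_lhs => rw [← DirectSum.sum_support_decompose W.gr b]
    rw [map_sum]
    simp only [Finset.sum_apply, LinearMap.sum_apply, map_sum]
  rw [eb]
  exact Submodule.sum_mem _ fun q _ => H q _ (SetLike.coe_mem _)

lemma NW_Fn_closed (n : ℤ) (a : V) (L : Finset (Fin N)) {y : M} (hy : y ∈ NWF Ms n) :
    Ms.amode a (-1) L y ∈ NWF Ms n := by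
  induction hy using Submodule.span_induction with
  | mem x hx =>
    obtain ⟨b, k, K', m', hk, hm', rfl⟩ := hx
    exact NW_claimC' Ms n a b L k K' m' hk hm'
  | zero => rw [map_zero]; exact zero_mem _
  | add x y _ _ hx hy => rw [map_add]; exact add_mem hx hy
  | smul c x _ hx => rw [map_smul]; exact Submodule.smul_mem _ _ hx

lemma NW_gen_mem_F (n : ℤ) (hn : 1 ≤ n) :
    ∀ (r : ℕ) (a : Fin (r + 1) → V) (k : Fin (r + 1) → ℕ)
      (K : Fin (r + 1) → Finset (Fin N)) (m : M), n ≤ ∑ i, (k i : ℤ) →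
      ((List.ofFn fun i => Ms.amode (a i) (-1 - (k i : ℤ)) (K i)).prod) m ∈ NWF Ms n := by
  intro r
  induction r with
  | zero =>
    intro a k K m hsum
    rw [Fin.sum_univ_succ, Fin.sum_univ_zero, add_zero] at hsum
    have hk : 1 ≤ k 0 := by omega
    have hm : m ∈ Ms.liFil (n - k 0) := by
      rw [NW_top Ms (by omega)]; trivial
    apply Submodule.subset_span
    refine ⟨a 0, k 0, K 0, m, hk, hm, ?_⟩
    simp [List.ofFn_succ]
  | succ r ih =>
    intro a k K m hsum
    have hprod : (List.ofFn fun i : Fin (r + 2) =>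
          Ms.amode (a i) (-1 - (k i : ℤ)) (K i)).prod
        = Ms.amode (a 0) (-1 - (k 0 : ℤ)) (K 0) *
          (List.ofFn fun i : Fin (r + 1) =>
            Ms.amode (a i.succ) (-1 - (k i.succ : ℤ)) (K i.succ)).prod := by
      rw [List.ofFn_succ, List.prod_cons]
    have hsum' : ∑ i : Fin (r + 1 + 1), (k i : ℤ)
        = (k 0 : ℤ) + ∑ i : Fin (r + 1), (k i.succ : ℤ) := by
      rw [Fin.sum_univ_succ]
    rw [hprod, Module.End.mul_apply]
    set y := ((List.ofFn fun i : Fin (r + 1) =>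
      Ms.amode (a i.succ) (-1 - (k i.succ : ℤ)) (K i.succ)).prod) m with hy
    by_cases hk0 : 1 ≤ k 0
    · have hym : y ∈ Ms.liFil (n - k 0) := by
        apply Submodule.subset_span
        refine ⟨r, fun i => a i.succ, fun i => k i.succ, fun i => K i.succ, m, ?_, rfl⟩
        show n - (k 0 : ℤ) ≤ ∑ i : Fin (r + 1), (k i.succ : ℤ)
        omega
      exact Submodule.subset_span ⟨a 0, k 0, K 0, y, hk0, hym, rfl⟩
    · have hk0' : k 0 = 0 := by omega
      have hyF : y ∈ NWF Ms n := by
        apply ih (fun i => a i.succ) (fun i => k i.succ) (fun i => K i.succ) m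
        show n ≤ ∑ i : Fin (r + 1), (k i.succ : ℤ)
        omega
      have := NW_Fn_closed Ms n (a 0) (K 0) hyF
      rw [hk0']
      simpa using this

/-- The auxiliary span `G n` appearing in part (5). -/
def NWG (n : ℤ) : Submodule 𝕜 M :=
  Submodule.span 𝕜 {x : M | ∃ (r : ℕ) (a : Fin (r + 1) → V)
      (k : Fin (r + 1) → ℕ) (K : Fin (r + 1) → Finset (Fin N)) (m : M),
    (∀ i, 1 ≤ k i) ∧ n ≤ ∑ i, (k i : ℤ) ∧
    x = ((List.ofFn fun i => Ms.amode (a i) (-1 - (k i : ℤ)) (K i)).prod) m}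

lemma NW_G_le_E (n : ℤ) : NWG Ms n ≤ Ms.liFil n := by
  apply Submodule.span_mono
  rintro x ⟨r, a, k, K, m, _, hsum, hx⟩
  exact ⟨r, a, k, K, m, hsum, hx⟩

lemma NW_G_mode (a : V) (k : ℕ) (hk : 1 ≤ k) (K : Finset (Fin N)) (s : ℤ) {x : M}
    (hx : x ∈ NWG Ms s) : Ms.amode a (-1 - (k : ℤ)) K x ∈ NWG Ms (s + k) := by
  induction hx using Submodule.span_induction with
  | mem x hx =>
    obtain ⟨r, a', k', K', m, hall, hsum, rfl⟩ := hx
    apply Submodule.subset_span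
    refine ⟨r + 1, Fin.cons a a', Fin.cons k k', Fin.cons K K', m, ?_, ?_, ?_⟩
    · intro i
      induction i using Fin.cases with
      | zero => simpa using hk
      | succ i => simpa using hall i
    · rw [NW_cons_sum]; omega
    · rw [NW_cons_prod, Module.End.mul_apply]
  | zero => rw [map_zero]; exact zero_mem _
  | add x y _ _ hx hy => rw [map_add]; exact add_mem hx hy
  | smul c x _ hx => rw [map_smul]; exact Submodule.smul_mem _ _ hx

lemma NW_E_eq_F (n : ℤ) (hn : 1 ≤ n) : Ms.liFil n = NWF Ms n := by
  apply le_antisymm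
  · apply Submodule.span_le.mpr
    rintro x ⟨r, a, k, K, m, hsum, rfl⟩
    exact NW_gen_mem_F Ms n hn r a k K m hsum
  · exact NW_F_le_E Ms n

lemma NW_E_le_G : ∀ n' : ℕ, 1 ≤ n' → Ms.liFil (n' : ℤ) ≤ NWG Ms (n' : ℤ) := by
  intro n'
  induction n' using Nat.strong_induction_on with
  | _ n' ih =>
    intro hn'
    rw [NW_E_eq_F Ms _ (by exact_mod_cast hn')]
    apply Submodule.span_le.mpr
    rintro x ⟨a, k, K, m, hk, hm, rfl⟩
    by_cases h : (n' : ℤ) - k ≤ 0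
    · apply Submodule.subset_span
      refine ⟨0, fun _ => a, fun _ => k, fun _ => K, m, fun _ => hk, ?_, ?_⟩
      · rw [Fin.sum_univ_succ, Fin.sum_univ_zero, add_zero]
        show (n' : ℤ) ≤ ((k : ℕ) : ℤ)
        omega
      · simp [List.ofFn_succ]
    · have hkn : k < n' := by omega
      have hcast : (n' : ℤ) - k = ((n' - k : ℕ) : ℤ) := by push_cast [Nat.cast_sub hkn.le]; ring
      have hm' : m ∈ NWG Ms ((n' - k : ℕ) : ℤ) := by
        apply ih (n' - k) (by omega) (by omega)
        rwa [hcast] at hm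
      have h2 := NW_G_mode Ms a k hk K _ hm'
      have hfin : ((n' - k : ℕ) : ℤ) + k = (n' : ℤ) := by
        push_cast [Nat.cast_sub hkn.le]; ring
      rwa [hfin] at h2

lemma NW_E_eq_G (n : ℤ) (hn : 1 ≤ n) : Ms.liFil n = NWG Ms n := by
  have hnn : n = ((n.toNat : ℕ) : ℤ) := by omega
  rw [hnn]
  apply le_antisymm
  · exact NW_E_le_G Ms n.toNat (by omega)
  · exact NW_G_le_E Ms _

end AuxNW

/-- **Basic properties of the Li filtration of a module, `N_W = N` case:**
(1) the filtration is decreasing; (2) `E n (M) = M` for `n ≤ 0`;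
(3) `a_(-1-k|K) E n (M) ⊆ E (n+k) (M)`; (4) for `n ≥ 1`, `E n (M)` is spanned by the
elements `a_(-1-k|K) m` with `k ≥ 1` and `m ∈ E (n-k) (M)`; (5) for `n ≥ 1`,
`E n (M)` is spanned by the elements `a¹_(-1-k₁|K₁) ⋯ a^r_(-1-k_r|K_r) m` with
`r ≥ 1`, all `k_i ≥ 1` and `k₁ + ⋯ + k_r ≥ n`. -/
theorem NW_liFil_basic
    (𝕜 : Type) [Field 𝕜] [CharZero 𝕜] (N : ℕ) (hN : 0 < N)
    (V : Type) [AddCommGroup V] [Module 𝕜 V]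
    (M : Type) [AddCommGroup M] [Module 𝕜 M]
    (W : NWSusyVA 𝕜 N V) (Ms : NWModule 𝕜 N V M W) :
    (∀ n : ℤ, Ms.liFil (n + 1) ≤ Ms.liFil n) ∧
    (∀ n : ℤ, n ≤ 0 → Ms.liFil n = ⊤) ∧
    (∀ (a : V) (k : ℕ) (K : Finset (Fin N)) (n : ℤ) (x : M),
      x ∈ Ms.liFil n → Ms.amode a (-1 - (k : ℤ)) K x ∈ Ms.liFil (n + k)) ∧
    (∀ n : ℤ, 1 ≤ n →
      Ms.liFil n = Submodule.span 𝕜 {x : M | ∃ (a : V) (k : ℕ) (K : Finset (Fin N)) (m : M),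
        1 ≤ k ∧ m ∈ Ms.liFil (n - k) ∧ x = Ms.amode a (-1 - (k : ℤ)) K m}) ∧
    (∀ n : ℤ, 1 ≤ n →
      Ms.liFil n = Submodule.span 𝕜 {x : M | ∃ (r : ℕ) (a : Fin (r + 1) → V)
          (k : Fin (r + 1) → ℕ) (K : Fin (r + 1) → Finset (Fin N)) (m : M),
        (∀ i, 1 ≤ k i) ∧ n ≤ ∑ i, (k i : ℤ) ∧
        x = ((List.ofFn fun i => Ms.amode (a i) (-1 - (k i : ℤ)) (K i)).prod) m}) := by
  refine ⟨fun n => NW_mono Ms (by omega), fun n hn => NW_top Ms hn,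
    fun a k K n x hx => NW_mode_mem Ms a k K hx,
    fun n hn => NW_E_eq_F Ms n hn,
    fun n hn => NW_E_eq_G Ms n hn⟩

end SUSY
end

section
/- Let V be an N_W=N SUSY vertex algebra and M a V-module, with Li filtration E_n(M). For every a ∈ V, l, n ∈ ℤ and L ⊂ [N] one has a_{(l|L)} E_n(M) ⊆ E_{n−l−1}(M); and if moreover l ≥ 0, then a_{(l|L)} E_n(M) ⊆ E_{n−l}(M). -/
open Finset
open scoped DirectSum

namespace SUSY

section LiAux

variable {𝕜 : Type} [Field 𝕜] [CharZero 𝕜] {N : ℕ}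
variable {V : Type} [AddCommGroup V] [Module 𝕜 V]
variable {M : Type} [AddCommGroup M] [Module 𝕜 M]
variable {W : NWSusyVA 𝕜 N V} (Ms : NWModule 𝕜 N V M W)

lemma liFil_mono {n n' : ℤ} (h : n' ≤ n) : Ms.liFil n ≤ Ms.liFil n' :=
  Submodule.span_mono (fun x hx => by
    obtain ⟨r, a, k, K, m, hs, hx⟩ := hx
    exact ⟨r, a, k, K, m, le_trans h hs, hx⟩)

lemma mem_liFil_of_nonpos {n : ℤ} (h : n ≤ 0) (x : M) : x ∈ Ms.liFil n := by
  apply Submodule.subset_span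
  refine ⟨0, fun _ => W.vac, fun _ => 0, fun _ => Finset.univ, x, by simpa using h, ?_⟩
  have : (List.ofFn fun _ : Fin 1 => Ms.amode W.vac (-1 - ((0 : ℕ) : ℤ)) Finset.univ).prod
      = Ms.amode W.vac (-1 - ((0 : ℕ) : ℤ)) Finset.univ := by
    simp [List.ofFn_succ]
  rw [this, Ms.vac_act]
  norm_num

lemma liFil_prepend (a : V) (k : ℕ) (K : Finset (Fin N)) {n : ℤ} {x : M}
    (hx : x ∈ Ms.liFil n) :
    Ms.amode a (-1 - (k : ℤ)) K x ∈ Ms.liFil (n + (k : ℤ)) := by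
  suffices h : Ms.liFil n ≤ (Ms.liFil (n + (k : ℤ))).comap (Ms.amode a (-1 - (k : ℤ)) K) from
    h hx
  rw [NWModule.liFil, Submodule.span_le]
  rintro x ⟨r, as, ks, Ks, m, hs, rfl⟩
  simp only [SetLike.mem_coe, Submodule.mem_comap]
  apply Submodule.subset_span
  refine ⟨r + 1, Fin.cons a as, Fin.cons k ks, Fin.cons K Ks, m, ?_, ?_⟩
  · rw [Fin.sum_univ_succ]
    simp only [Fin.cons_zero, Fin.cons_succ]
    omega
  · simp only [List.ofFn_succ, Fin.cons_zero, Fin.cons_succ, List.prod_cons,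
      Module.End.mul_apply]

lemma finsum_mem_submodule {p : Submodule 𝕜 M} (f : ℕ → M) (h : ∀ j, f j ∈ p) :
    (∑ᶠ j, f j) ∈ p := by
  by_cases hf : (Function.support f).Finite
  · rw [finsum_eq_sum f hf]
    exact Submodule.sum_mem _ fun i _ => h i
  · rw [finsum_of_infinite_support hf]
    exact p.zero_mem

/-- Core step: commuting a nonnegative mode past a single negative mode. -/
lemma liFil_core (l : ℕ)
    (IH : ∀ l' : ℕ, l' < l → ∀ (c : V) (L' : Finset (Fin N)) (n : ℤ) (x : M),
      x ∈ Ms.liFil n → Ms.amode c (l' : ℤ) L' x ∈ Ms.liFil (n - l'))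
    (b : V) (k₀ : ℕ) (K₀ : Finset (Fin N)) (y : M) (s' : ℤ)
    (hy : y ∈ Ms.liFil s')
    (hy' : ∀ (c : V) (L' : Finset (Fin N)), Ms.amode c (l : ℤ) L' y ∈ Ms.liFil (s' - l))
    (a : V) (L : Finset (Fin N)) :
    Ms.amode a (l : ℤ) L (Ms.amode b (-1 - (k₀ : ℤ)) K₀ y) ∈ Ms.liFil (s' + k₀ - l) := by
  classical
  letI : DirectSum.Decomposition W.gr := W.decomp
  set p : Submodule 𝕜 M := Ms.liFil (s' + (k₀ : ℤ) - (l : ℤ)) with hp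
  have hcomp : ∀ (pa pb : ZMod 2) (a' b' : V), a' ∈ W.gr pa → b' ∈ W.gr pb →
      Ms.amode a' (l : ℤ) L (Ms.amode b' (-1 - (k₀ : ℤ)) K₀ y) ∈ p := by
    intro pa pb a' b' ha' hb'
    have hc := Ms.comm_formula pa pb a' b' ha' hb' (l : ℤ) (-1 - (k₀ : ℤ)) L K₀ y
    rw [sub_eq_iff_eq_add] at hc
    rw [hc]
    apply Submodule.add_mem
    · -- the double sum of commutator terms
      apply finsum_mem_submodule
      intro j
      apply Submodule.sum_mem
      intro J _
      split
      · apply Submodule.smul_mem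
        set e : ℤ := (l : ℤ) + (-1 - (k₀ : ℤ)) - (j : ℤ) with hedef
        rcases le_or_gt 0 e with he | he
        · have hcast : (e.toNat : ℤ) = e := Int.toNat_of_nonneg he
          have h1 := IH e.toNat (by omega) (W.mode a' (j : ℤ) J b') (K₀ ∪ (L \ J)) s' y hy
          rw [hcast] at h1
          exact liFil_mono Ms (by omega) h1
        · have hk : (((-1 - e).toNat : ℤ)) = -1 - e := Int.toNat_of_nonneg (by omega)
          have h1 := liFil_prepend Ms (W.mode a' (j : ℤ) J b') (-1 - e).toNat
            (K₀ ∪ (L \ J)) hy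
          rw [hk, sub_sub_cancel] at h1
          exact liFil_mono Ms (by omega) h1
      · exact p.zero_mem
    · -- the reordered term
      have h1 := hy' a' L
      have h2 := liFil_prepend Ms b' k₀ K₀ h1
      have he : s' - (l : ℤ) + (k₀ : ℤ) = s' + (k₀ : ℤ) - (l : ℤ) := by ring
      rw [he] at h2
      exact zsmul_mem h2 _
  have expand : Ms.amode a (l : ℤ) L (Ms.amode b (-1 - (k₀ : ℤ)) K₀ y)
      = ∑ pa ∈ (DirectSum.decompose W.gr a).support,
          ∑ pb ∈ (DirectSum.decompose W.gr b).support,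
            Ms.amode ((DirectSum.decompose W.gr a) pa : V) (l : ℤ) L
              (Ms.amode ((DirectSum.decompose W.gr b) pb : V) (-1 - (k₀ : ℤ)) K₀ y) := by
    conv_lhs =>
      rw [← DirectSum.sum_support_decompose W.gr a, ← DirectSum.sum_support_decompose W.gr b]
    rw [map_sum]
    simp only [Finset.sum_apply, LinearMap.sum_apply]
    refine Finset.sum_congr rfl fun pa _ => ?_
    rw [map_sum]
    simp only [Finset.sum_apply, LinearMap.sum_apply, map_sum]
  rw [expand]
  exact Submodule.sum_mem _ fun pa _ => Submodule.sum_mem _ fun pb _ =>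
    hcomp pa pb _ _ (SetLike.coe_mem _) (SetLike.coe_mem _)

lemma liFil_nonneg_mode (l : ℕ) :
    ∀ (a : V) (L : Finset (Fin N)) (n : ℤ) (x : M),
      x ∈ Ms.liFil n → Ms.amode a (l : ℤ) L x ∈ Ms.liFil (n - l) := by
  induction l using Nat.strong_induction_on with
  | _ l IH =>
  have key : ∀ (r : ℕ) (as : Fin (r + 1) → V) (ks : Fin (r + 1) → ℕ)
      (Ks : Fin (r + 1) → Finset (Fin N)) (m : M) (a : V) (L : Finset (Fin N)),
      Ms.amode a (l : ℤ) L
          (((List.ofFn fun i => Ms.amode (as i) (-1 - (ks i : ℤ)) (Ks i)).prod) m)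
        ∈ Ms.liFil ((∑ i, (ks i : ℤ)) - l) := by
    intro r
    induction r with
    | zero =>
      intro as ks Ks m a L
      have h0 : (List.ofFn fun i : Fin 1 => Ms.amode (as i) (-1 - (ks i : ℤ)) (Ks i)).prod m
          = Ms.amode (as 0) (-1 - (ks 0 : ℤ)) (Ks 0) m := by
        simp [List.ofFn_succ]
      rw [h0]
      have h1 := liFil_core Ms l IH (as 0) (ks 0) (Ks 0) m 0
        (mem_liFil_of_nonpos Ms le_rfl m)
        (fun c L' => mem_liFil_of_nonpos Ms (by omega) _) a L
      have he : (0 : ℤ) + (ks 0 : ℤ) - (l : ℤ) = (∑ i : Fin 1, (ks i : ℤ)) - l := by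
        rw [Fin.sum_univ_one]; ring
      rwa [he] at h1
    | succ r ih =>
      intro as ks Ks m a L
      set y : M := (List.ofFn fun i : Fin (r + 1) =>
        Ms.amode (as i.succ) (-1 - (ks i.succ : ℤ)) (Ks i.succ)).prod m with hydef
      have hsplit : (List.ofFn fun i : Fin (r + 2) =>
            Ms.amode (as i) (-1 - (ks i : ℤ)) (Ks i)).prod m
          = Ms.amode (as 0) (-1 - (ks 0 : ℤ)) (Ks 0) y := by
        simp only [hydef, List.ofFn_succ, List.prod_cons, Module.End.mul_apply]
      rw [hsplit]
      have hy : y ∈ Ms.liFil (∑ i : Fin (r + 1), (ks i.succ : ℤ)) :=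
        Submodule.subset_span ⟨r, fun i => as i.succ, fun i => ks i.succ,
          fun i => Ks i.succ, m, le_rfl, rfl⟩
      have hy' : ∀ (c : V) (L' : Finset (Fin N)),
          Ms.amode c (l : ℤ) L' y ∈ Ms.liFil ((∑ i : Fin (r + 1), (ks i.succ : ℤ)) - l) :=
        fun c L' => ih (fun i => as i.succ) (fun i => ks i.succ) (fun i => Ks i.succ) m c L'
      have h1 := liFil_core Ms l IH (as 0) (ks 0) (Ks 0) y _ hy hy' a L
      have he : (∑ i : Fin (r + 1), (ks i.succ : ℤ)) + (ks 0 : ℤ) - (l : ℤ)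
          = (∑ i : Fin (r + 2), (ks i : ℤ)) - l := by
        conv_rhs => rw [Fin.sum_univ_succ]
        ring
      rwa [he] at h1
  intro a L n x hx
  suffices h : Ms.liFil n ≤ (Ms.liFil (n - l)).comap (Ms.amode a (l : ℤ) L) from h hx
  rw [NWModule.liFil, Submodule.span_le]
  rintro x ⟨r, as, ks, Ks, m, hs, rfl⟩
  simp only [SetLike.mem_coe, Submodule.mem_comap]
  exact liFil_mono Ms (by omega) (key r as ks Ks m a L)

end LiAux

/-- **Modes shift the Li filtration of a module, `N_W = N` case:**
`a_(l|L) E n (M) ⊆ E (n-l-1) (M)` for all `l ∈ ℤ`, and moreover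
`a_(l|L) E n (M) ⊆ E (n-l) (M)` when `l ≥ 0`. -/
theorem NW_mode_shifts_liFil
    (𝕜 : Type) [Field 𝕜] [CharZero 𝕜] (N : ℕ) (hN : 0 < N)
    (V : Type) [AddCommGroup V] [Module 𝕜 V]
    (M : Type) [AddCommGroup M] [Module 𝕜 M]
    (W : NWSusyVA 𝕜 N V) (Ms : NWModule 𝕜 N V M W) :
    (∀ (a : V) (l n : ℤ) (L : Finset (Fin N)) (x : M),
      x ∈ Ms.liFil n → Ms.amode a l L x ∈ Ms.liFil (n - l - 1)) ∧
    (∀ (a : V) (l n : ℤ) (L : Finset (Fin N)), 0 ≤ l → ∀ x : M,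
      x ∈ Ms.liFil n → Ms.amode a l L x ∈ Ms.liFil (n - l)) := by
  have h2 : ∀ (a : V) (l n : ℤ) (L : Finset (Fin N)), 0 ≤ l → ∀ x : M,
      x ∈ Ms.liFil n → Ms.amode a l L x ∈ Ms.liFil (n - l) := by
    intro a l n L hl x hx
    obtain ⟨l', rfl⟩ : ∃ l' : ℕ, l = (l' : ℤ) := ⟨l.toNat, (Int.toNat_of_nonneg hl).symm⟩
    exact liFil_nonneg_mode Ms l' a L n x hx
  refine ⟨?_, h2⟩
  intro a l n L x hx
  rcases le_or_gt 0 l with hl | hl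
  · exact liFil_mono Ms (by omega) (h2 a l n L hl x hx)
  · have hk : ((-1 - l).toNat : ℤ) = -1 - l := Int.toNat_of_nonneg (by omega)
    have h1 := liFil_prepend Ms a (-1 - l).toNat L hx
    rw [hk, sub_sub_cancel] at h1
    exact liFil_mono Ms (by omega) h1

end SUSY
end
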